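/- Let v be a positive word over {a, b} whose first and last letters are both a, and suppose v represents the same element of the braid group ⟨a, b ∣ aba = bab⟩ as b^i · a · b^k for some integers i, k ≥ 1. Then either i = 1 and v = a^k·b·a, or k = 1 and v = a·b·a^i. -/

import Mathlib

open Monoid

abbrev FPfam : Bool → Type := fun b => match b with
  | false => Multiplicative (ZMod 2)
  | true => Multiplicative (ZMod 3)

instance FPgroup : (i : Bool) → Group (FPfam i)
  | false => inferInstanceAs (Group (Multiplicative (ZMod 2)))
  | true => inferInstanceAs (Group (Multiplicative (ZMod 3)))

instance FPdec : (i : Bool) → DecidableEq (FPfam i)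
  | false => inferInstanceAs (DecidableEq (Multiplicative (ZMod 2)))
  | true => inferInstanceAs (DecidableEq (Multiplicative (ZMod 3)))

abbrev Gam := Monoid.CoprodI FPfam

noncomputable def sg : Gam := Monoid.CoprodI.of (i := false) (Multiplicative.ofAdd (1 : ZMod 2))
noncomputable def ug : Gam := Monoid.CoprodI.of (i := true) (Multiplicative.ofAdd (1 : ZMod 3))

theorem sgsg : sg * sg = 1 := by
  rw [sg, ← MonoidHom.map_mul]
  have : (Multiplicative.ofAdd (1 : ZMod 2)) * (Multiplicative.ofAdd (1 : ZMod 2)) = 1 := by decide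
  rw [this, MonoidHom.map_one]

theorem ugugug : ug * (ug * ug) = 1 := by
  rw [ug, ← MonoidHom.map_mul, ← MonoidHom.map_mul]
  have : (Multiplicative.ofAdd (1 : ZMod 3)) * ((Multiplicative.ofAdd (1 : ZMod 3)) * (Multiplicative.ofAdd (1 : ZMod 3))) = 1 := by decide
  rw [this, MonoidHom.map_one]

theorem sg_cancel (g : Gam) : sg * (sg * g) = g := by rw [← mul_assoc, sgsg, one_mul]
theorem ug_cancel (g : Gam) : ug * (ug * (ug * g)) = g := by
  rw [← mul_assoc, ← mul_assoc,
    show ug * ug * ug = 1 from by rw [mul_assoc]; exact ugugug, one_mul]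

theorem prod_inj (w1 w2 : Monoid.CoprodI.Word FPfam) (h : w1.prod = w2.prod) : w1 = w2 := by
  have h1 := (Monoid.CoprodI.Word.equiv (M := FPfam)).right_inv w1
  have h2 := (Monoid.CoprodI.Word.equiv (M := FPfam)).right_inv w2
  dsimp at h1 h2
  rw [← h1, ← h2]
  show Monoid.CoprodI.Word.equiv w1.prod = Monoid.CoprodI.Word.equiv w2.prod
  rw [h]

/-! ### Letters and reduced words -/

inductive Lam : Type
  | S : Lam
  | u : Lam
  | U : Lam
deriving DecidableEq, Repr

noncomputable def evL : Lam → Gam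
  | .S => sg
  | .u => ug
  | .U => ug * ug

noncomputable def ev (R : List Lam) : Gam := (R.map evL).prod

@[simp] theorem ev_nil : ev [] = 1 := rfl
@[simp] theorem ev_cons (x : Lam) (R : List Lam) : ev (x :: R) = evL x * ev R := by
  simp [ev]

/-- transducer: prepend a = u²s -/
def Pa : List Lam → List Lam
  | .S :: .u :: X => X
  | .S :: .U :: X => .u :: X
  | [.S] => [.U]
  | R => .U :: .S :: R

/-- transducer: prepend b = su² -/
def Pb : List Lam → List Lam
  | .u :: .S :: X => X
  | [.u] => [.S]
  | .u :: .u :: X => .S :: .u :: X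
  | .u :: .U :: X => .S :: .U :: X
  | .U :: X => .S :: .u :: X
  | R => .S :: .U :: R

theorem ev_Pa : ∀ R, ev (Pa R) = (ug * ug * sg) * ev R := by
  intro R
  rcases R with _ | ⟨x, _ | ⟨y, X⟩⟩
  · simp [Pa, evL, mul_assoc]
  · cases x <;> simp [Pa, evL, mul_assoc, sg_cancel, ug_cancel, sgsg, ugugug]
  · cases x <;> cases y <;>
      simp [Pa, evL, mul_assoc, sg_cancel, ug_cancel, sgsg, ugugug]

theorem ev_Pb : ∀ R, ev (Pb R) = (sg * (ug * ug)) * ev R := by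
  intro R
  rcases R with _ | ⟨x, _ | ⟨y, X⟩⟩
  · simp [Pb, evL, mul_assoc]
  · cases x <;> simp [Pb, evL, mul_assoc, sg_cancel, ug_cancel, sgsg, ugugug]
  · cases x <;> cases y <;>
      simp [Pb, evL, mul_assoc, sg_cancel, ug_cancel, sgsg, ugugug]

/-! ### Reducedness -/

def good : Lam → Lam → Bool
  | .S, .u => true
  | .S, .U => true
  | .u, .S => true
  | .U, .S => true
  | _, _ => false

def RedB : List Lam → Bool
  | [] => true
  | [_] => true
  | x :: y :: X => good x y && RedB (y :: X)

theorem RedB_Pa : ∀ R, RedB R = true → RedB (Pa R) = true := by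
  intro R
  rcases R with _ | ⟨x, _ | ⟨y, X⟩⟩
  · intro _; rfl
  · cases x <;> simp [Pa, RedB, good]
  · cases x <;> cases y <;> simp_all [Pa, RedB, good] <;>
      (try (rcases X with _ | ⟨z, X'⟩ <;> simp_all [RedB, good] <;> cases z <;> simp_all [good]))

theorem RedB_Pb : ∀ R, RedB R = true → RedB (Pb R) = true := by
  intro R
  rcases R with _ | ⟨x, _ | ⟨y, X⟩⟩
  · intro _; rfl
  · cases x <;> simp [Pb, RedB, good]
  · cases x <;> cases y <;> simp_all [Pb, RedB, good] <;>
      (try (rcases X with _ | ⟨z, X'⟩ <;> simp_all [RedB, good] <;> cases z <;> simp_all [good]))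

/-! ### Injectivity of ev on reduced words -/

def letterSig : Lam → Σ i, FPfam i
  | .S => ⟨false, Multiplicative.ofAdd (1 : ZMod 2)⟩
  | .u => ⟨true, Multiplicative.ofAdd (1 : ZMod 3)⟩
  | .U => ⟨true, Multiplicative.ofAdd (2 : ZMod 3)⟩

theorem letterSig_inj : Function.Injective letterSig := by
  intro x y h
  cases x <;> cases y <;> simp_all [letterSig] <;> exact absurd h (by decide)

theorem letterSig_ne_one (x : Lam) : (letterSig x).2 ≠ 1 := by
  cases x <;> simp [letterSig] <;> exact fun h => absurd (congrArg Multiplicative.toAdd h) (by decide)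

theorem letterSig_fst (x y : Lam) (h : good x y = true) :
    (letterSig x).1 ≠ (letterSig y).1 := by
  cases x <;> cases y <;> simp_all [letterSig, good]

theorem of_letterSig (x : Lam) : Monoid.CoprodI.of (letterSig x).2 = evL x := by
  cases x
  · rfl
  · rfl
  · show Monoid.CoprodI.of (i := true) (Multiplicative.ofAdd (2 : ZMod 3)) = ug * ug
    rw [ug, ← MonoidHom.map_mul]
    congr 1

/-- build a `Word` from a reduced list -/
def toWord (R : List Lam) (h : RedB R = true) : Monoid.CoprodI.Word FPfam where
  toList := R.map letterSig
  ne_one := by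
    intro l hl
    simp only [List.mem_map] at hl
    obtain ⟨x, _, rfl⟩ := hl
    exact letterSig_ne_one x
  chain_ne := by
    induction R with
    | nil => simp
    | cons x X ih =>
      cases X with
      | nil => simp
      | cons y Y =>
        have hg : good x y = true := by
          have := h; simp [RedB] at this; exact this.1
        have hR : RedB (y :: Y) = true := by
          have := h; simp [RedB] at this; exact this.2
        simp only [List.map_cons, List.isChain_cons_cons]
        exact ⟨letterSig_fst x y hg, by simpa using ih hR⟩

theorem toWord_prod (R : List Lam) (h : RedB R = true) : (toWord R h).prod = ev R := by
  simp only [Monoid.CoprodI.Word.prod, toWord, ev, List.map_map]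
  congr 1
  apply List.map_congr_left
  intro x _
  exact of_letterSig x

theorem ev_inj (R1 R2 : List Lam) (h1 : RedB R1 = true) (h2 : RedB R2 = true)
    (h : ev R1 = ev R2) : R1 = R2 := by
  have : toWord R1 h1 = toWord R2 h2 := by
    apply prod_inj
    rw [toWord_prod, toWord_prod, h]
  have hl : R1.map letterSig = R2.map letterSig := congrArg Monoid.CoprodI.Word.toList this
  exact (List.map_injective_iff.mpr letterSig_inj) hl

/-! ### the lower-bound weight function mw -/

def mw : List Lam → ℕ
  | [] => 0
  | .u :: X => 2 + mw X
  | .U :: .S :: X => 1 + mw X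
  | .U :: X => 4 + mw X
  | .S :: .u :: .S :: X => 2 + mw X
  | .S :: .u :: X => 5 + mw X
  | .S :: .U :: X => 1 + mw X
  | .S :: X => 3 + mw X

@[simp] theorem mw_nil : mw [] = 0 := rfl
@[simp] theorem mw_u (X : List Lam) : mw (.u :: X) = 2 + mw X := rfl
@[simp] theorem mw_US (X : List Lam) : mw (.U :: .S :: X) = 1 + mw X := rfl
@[simp] theorem mw_Unil : mw [.U] = 4 := rfl
@[simp] theorem mw_Uu (X : List Lam) : mw (.U :: .u :: X) = 4 + mw (.u :: X) := rfl
@[simp] theorem mw_UU (X : List Lam) : mw (.U :: .U :: X) = 4 + mw (.U :: X) := rfl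
theorem mw_Su (X : List Lam) : mw (.S :: .u :: X) = 1 + mw (.U :: X) := by
  rcases X with _ | ⟨x, Y⟩
  · rfl
  · cases x <;> simp [mw] <;> omega
@[simp] theorem mw_SU (X : List Lam) : mw (.S :: .U :: X) = 1 + mw X := rfl
@[simp] theorem mw_Snil : mw [.S] = 3 := rfl
@[simp] theorem mw_SS (X : List Lam) : mw (.S :: .S :: X) = 3 + mw (.S :: X) := rfl

/-- the four comparison lemmas, proved simultaneously by strong induction -/
theorem mw_cmp : ∀ n X, X.length ≤ n →
    (mw (.S :: X) ≤ 3 + mw X ∧ mw (.U :: X) ≤ 4 + mw X ∧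
     mw X ≤ 3 + mw (.S :: X) ∧ mw X ≤ 2 + mw (.U :: X)) := by
  intro n
  induction n with
  | zero =>
    intro X hX
    rw [Nat.le_zero, List.length_eq_zero_iff] at hX
    subst hX
    refine ⟨by simp, by simp, by simp, by simp⟩
  | succ n ih =>
    intro X hX
    rcases X with _ | ⟨x, Y⟩
    · refine ⟨by simp, by simp, by simp, by simp⟩
    have hY : Y.length ≤ n := by
      simp only [List.length_cons] at hX; omega
    refine ⟨?_, ?_, ?_, ?_⟩
    · cases x
      · simp only [mw_SS]; omega
      · have := (ih Y hY).2.1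
        simp only [mw_Su, mw_u]; omega
      · have := (ih Y hY).2.2.2
        simp only [mw_SU]; omega
    · cases x
      · have := (ih Y hY).2.2.1
        simp only [mw_US]; omega
      · simp only [mw_Uu]; omega
      · simp only [mw_UU]; omega
    · cases x
      · simp only [mw_SS]; omega
      · have := (ih Y hY).2.2.2
        simp only [mw_Su, mw_u]; omega
      · have := (ih Y hY).2.1
        simp only [mw_SU]; omega
    · cases x
      · have := (ih Y hY).1
        simp only [mw_US]; omega
      · simp only [mw_Uu]; omega
      · simp only [mw_UU]; omega

theorem mw_S_le (X : List Lam) : mw (.S :: X) ≤ 3 + mw X := (mw_cmp X.length X le_rfl).1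
theorem mw_U_le (X : List Lam) : mw (.U :: X) ≤ 4 + mw X := (mw_cmp X.length X le_rfl).2.1
theorem le_mw_S (X : List Lam) : mw X ≤ 3 + mw (.S :: X) := (mw_cmp X.length X le_rfl).2.2.1
theorem le_mw_U (X : List Lam) : mw X ≤ 2 + mw (.U :: X) := (mw_cmp X.length X le_rfl).2.2.2

theorem mw_Pa (R : List Lam) : mw (Pa R) ≤ 1 + mw R := by
  rcases R with _ | ⟨x, _ | ⟨y, X⟩⟩
  · simp [Pa]
  · cases x <;> simp [Pa, mw] <;> omega
  · cases x <;> cases y <;> simp only [Pa] <;>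
      first
      | (simp only [mw_Su, mw_SU, mw_US, mw_u, mw_Uu, mw_UU, mw_SS] ; omega)
      | (have h4 := le_mw_U X; simp only [mw_Su, mw_SU, mw_US, mw_u] ; omega)

theorem mw_Pb (R : List Lam) : mw (Pb R) ≤ 1 + mw R := by
  rcases R with _ | ⟨x, _ | ⟨y, X⟩⟩
  · simp [Pb]
  · cases x <;> simp [Pb, mw] <;> omega
  · cases x <;> cases y <;> simp only [Pb] <;>
      first
      | (simp only [mw_Su, mw_SU, mw_US, mw_u, mw_Uu, mw_UU, mw_SS] ; omega)
      | (have h3 := le_mw_S X; have h4 := le_mw_U X; have h2 := mw_U_le X;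
         simp only [mw_Su, mw_SU, mw_US, mw_u, mw_Uu, mw_UU, mw_SS] ; omega)

def stepL : Fin 2 → List Lam → List Lam
  | 0, R => Pa R
  | 1, R => Pb R

def red (w : List (Fin 2)) : List Lam := w.foldr stepL []

@[simp] theorem red_nil : red [] = [] := rfl
@[simp] theorem red_cons (c : Fin 2) (w : List (Fin 2)) :
    red (c :: w) = stepL c (red w) := rfl

theorem mw_red_le (w : List (Fin 2)) : mw (red w) ≤ w.length := by
  induction w with
  | nil => simp
  | cons c w ih =>
    simp only [red_cons, List.length_cons]
    fin_cases c
    · exact le_trans (mw_Pa _) (by omega)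
    · exact le_trans (mw_Pb _) (by omega)

/-! ### braid group and homomorphisms -/

def braidRels : Set (FreeGroup (Fin 2)) :=
  {FreeGroup.of 0 * FreeGroup.of 1 * FreeGroup.of 0 *
    (FreeGroup.of 1 * FreeGroup.of 0 * FreeGroup.of 1)⁻¹}

abbrev BraidGroup := PresentedGroup braidRels

noncomputable def a : BraidGroup := PresentedGroup.of 0
noncomputable def b : BraidGroup := PresentedGroup.of 1

noncomputable def wordProd (w : List (Fin 2)) : BraidGroup :=
  (w.map PresentedGroup.of).prod

noncomputable def genIm : Fin 2 → Gam := fun c => if c = 0 then ug * ug * sg else sg * (ug * ug)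

theorem fin2_cases (c : Fin 2) : c = 0 ∨ c = 1 := by
  fin_cases c
  exacts [Or.inl rfl, Or.inr rfl]

theorem genIm0 : genIm 0 = ug * ug * sg := rfl
theorem genIm1 : genIm 1 = sg * (ug * ug) := rfl

theorem braid_rel_holds :
    ∀ r ∈ braidRels, (FreeGroup.lift genIm) r = 1 := by
  intro r hr
  rcases hr with rfl
  simp only [map_mul, map_inv, FreeGroup.lift_apply_of]
  rw [genIm0, genIm1, mul_inv_eq_one]
  -- (u²s)(su²)(u²s) = (su²)(u²s)(su²)
  have lhs : (ug * ug * sg) * (sg * (ug * ug)) * (ug * ug * sg) = sg := by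
    calc (ug * ug * sg) * (sg * (ug * ug)) * (ug * ug * sg)
        = ug * (ug * (sg * (sg * (ug * (ug * (ug * (ug * sg))))))) := by
          simp [mul_assoc]
      _ = ug * (ug * (ug * (ug * (ug * (ug * sg))))) := by rw [sg_cancel]
      _ = sg := by rw [ug_cancel, ug_cancel]
  have rhs : (sg * (ug * ug)) * (ug * ug * sg) * (sg * (ug * ug)) = sg := by
    calc (sg * (ug * ug)) * (ug * ug * sg) * (sg * (ug * ug))
        = sg * (ug * (ug * (ug * (ug * (sg * (sg * (ug * ug))))))) := by
          simp [mul_assoc]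
      _ = sg * (ug * (ug * (ug * (ug * (ug * ug))))) := by rw [sg_cancel]
      _ = sg * 1 := by rw [show ug * (ug * (ug * (ug * (ug * ug)))) = (1:Gam) from by
            rw [ug_cancel, ugugug]]
      _ = sg := mul_one sg
  rw [lhs, rhs]

noncomputable def psi : BraidGroup →* Gam := PresentedGroup.toGroup braid_rel_holds

theorem psi_of (c : Fin 2) : psi (PresentedGroup.of c) = genIm c :=
  PresentedGroup.toGroup.of braid_rel_holds

theorem psi_wordProd (w : List (Fin 2)) : psi (wordProd w) = ev (red w) := by
  induction w with
  | nil => simp [wordProd]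
  | cons c w ih =>
    have : wordProd (c :: w) = PresentedGroup.of c * wordProd w := by
      simp [wordProd]
    rw [this, map_mul, psi_of, ih, red_cons]
    rcases fin2_cases c with rfl | rfl
    · rw [genIm0, ← ev_Pa]; rfl
    · rw [genIm1, ← ev_Pb]; rfl

theorem RedB_red (w : List (Fin 2)) : RedB (red w) = true := by
  induction w with
  | nil => rfl
  | cons c w ih =>
    rw [red_cons]
    fin_cases c
    · exact RedB_Pa _ ih
    · exact RedB_Pb _ ih

/-! ### length homomorphism -/

theorem len_rel_holds :
    ∀ r ∈ braidRels, (FreeGroup.lift (fun _ : Fin 2 => Multiplicative.ofAdd (1 : ℤ))) r = 1 := by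
  intro r hr
  rcases hr with rfl
  simp only [map_mul, map_inv, FreeGroup.lift_apply_of]
  decide

noncomputable def lenHom : BraidGroup →* Multiplicative ℤ := PresentedGroup.toGroup len_rel_holds

theorem lenHom_of (c : Fin 2) : lenHom (PresentedGroup.of c) = Multiplicative.ofAdd (1 : ℤ) :=
  PresentedGroup.toGroup.of len_rel_holds

theorem lenHom_wordProd (w : List (Fin 2)) :
    lenHom (wordProd w) = Multiplicative.ofAdd (w.length : ℤ) := by
  induction w with
  | nil => simp [wordProd]
  | cons c w ih =>
    have : wordProd (c :: w) = PresentedGroup.of c * wordProd w := by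
      simp [wordProd]
    rw [this, map_mul, lenHom_of, ih, ← ofAdd_add]
    congr 1
    push_cast [List.length_cons]
    ring

/-! ### special word families -/

def sUl : ℕ → List Lam
  | 0 => []
  | n+1 => .S :: .U :: sUl n

def Usl : ℕ → List Lam
  | 0 => []
  | n+1 => .U :: .S :: Usl n

@[simp] theorem sUl_zero : sUl 0 = [] := rfl
@[simp] theorem sUl_succ (n : ℕ) : sUl (n+1) = .S :: .U :: sUl n := rfl
@[simp] theorem Usl_zero : Usl 0 = [] := rfl
@[simp] theorem Usl_succ (n : ℕ) : Usl (n+1) = .U :: .S :: Usl n := rfl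

theorem sUl_length (n : ℕ) : (sUl n).length = 2*n := by
  induction n with
  | zero => rfl
  | succ n ih => simp [sUl, ih]; omega

/-! transducer computation lemmas -/

theorem Pa_nil : Pa [] = [.U, .S] := rfl
theorem Pa_Su (X : List Lam) : Pa (.S :: .u :: X) = X := rfl
theorem Pa_SU (X : List Lam) : Pa (.S :: .U :: X) = .u :: X := rfl
theorem Pa_Snil : Pa [.S] = [.U] := rfl
theorem Pa_u (X : List Lam) : Pa (.u :: X) = .U :: .S :: .u :: X := rfl
theorem Pa_U (X : List Lam) : Pa (.U :: X) = .U :: .S :: .U :: X := rfl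

theorem Pb_nil : Pb [] = [.S, .U] := rfl
theorem Pb_uS (X : List Lam) : Pb (.u :: .S :: X) = X := rfl
theorem Pb_unil : Pb [.u] = [.S] := rfl
theorem Pb_U (X : List Lam) : Pb (.U :: X) = .S :: .u :: X := rfl
theorem Pb_S (X : List Lam) : Pb (.S :: X) = .S :: .U :: .S :: X := rfl

/-! mw values on the families -/

theorem mw_U_sUl (j : ℕ) : mw (.U :: sUl j) = j + 4 := by
  induction j with
  | zero => simp
  | succ j ih => simp only [sUl_succ, mw_US]; omega

theorem mw_S_Usl (j : ℕ) : mw (.S :: Usl j) = j + 3 := by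
  induction j with
  | zero => simp
  | succ j ih => simp only [Usl_succ, mw_SU, mw_US]; omega

theorem mw_key (x y : ℕ) : mw (.S :: (Usl x ++ .u :: sUl y)) = x + y + 5 := by
  induction x with
  | zero => simp only [Usl_zero, List.nil_append, mw_Su, mw_U_sUl]; omega
  | succ x ih =>
    simp only [Usl_succ, List.cons_append, mw_SU, mw_US] at *
    omega

/-! RedB on the families -/

theorem RedB_cc (x y : Lam) (X : List Lam) :
    RedB (x :: y :: X) = (good x y && RedB (y :: X)) := rfl

theorem RedB_sUl_aux (j : ℕ) : RedB (sUl j) = true ∧ RedB (.U :: sUl j) = true := by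
  induction j with
  | zero => exact ⟨rfl, rfl⟩
  | succ j ih =>
    have h1 : RedB (sUl (j+1)) = true := by
      simp only [sUl_succ, RedB_cc, good, Bool.true_and]
      exact ih.2
    refine ⟨h1, ?_⟩
    simp only [sUl_succ, RedB_cc, good, Bool.true_and]
    simpa only [sUl_succ, RedB_cc, good, Bool.true_and] using h1

theorem RedB_sUl (j : ℕ) : RedB (sUl j) = true := (RedB_sUl_aux j).1
theorem RedB_U_sUl (j : ℕ) : RedB (.U :: sUl j) = true := (RedB_sUl_aux j).2

theorem RedB_Usl_aux (j : ℕ) : RedB (Usl j) = true ∧ RedB (.S :: Usl j) = true := by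
  induction j with
  | zero => exact ⟨rfl, rfl⟩
  | succ j ih =>
    have h1 : RedB (Usl (j+1)) = true := by
      simp only [Usl_succ, RedB_cc, good, Bool.true_and]
      exact ih.2
    refine ⟨h1, ?_⟩
    simp only [Usl_succ, RedB_cc, good, Bool.true_and]
    simpa only [Usl_succ, RedB_cc, good, Bool.true_and] using h1

theorem RedB_Usl (j : ℕ) : RedB (Usl j) = true := (RedB_Usl_aux j).1
theorem RedB_S_Usl (j : ℕ) : RedB (.S :: Usl j) = true := (RedB_Usl_aux j).2

theorem RedB_u_sUl (j : ℕ) : RedB (.u :: sUl j) = true := by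
  rcases j with _ | j
  · rfl
  · simp only [sUl_succ, RedB_cc, good, Bool.true_and]
    simpa only [sUl_succ, RedB_cc, good, Bool.true_and] using RedB_sUl (j+1)

theorem RedB_mid_aux (x y : ℕ) : RedB (Usl x ++ .u :: sUl y) = true ∧
    RedB (.S :: (Usl x ++ .u :: sUl y)) = true := by
  induction x with
  | zero =>
    refine ⟨by simpa using RedB_u_sUl y, ?_⟩
    simp only [Usl_zero, List.nil_append, RedB_cc, good, Bool.true_and]
    exact RedB_u_sUl y
  | succ x ih =>
    have h1 : RedB (Usl (x+1) ++ .u :: sUl y) = true := by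
      simp only [Usl_succ, List.cons_append, RedB_cc, good, Bool.true_and]
      exact ih.2
    refine ⟨h1, ?_⟩
    simp only [Usl_succ, List.cons_append, RedB_cc, good, Bool.true_and]
    simpa only [Usl_succ, List.cons_append, RedB_cc, good, Bool.true_and] using h1

theorem RedB_mid (x y : ℕ) : RedB (Usl x ++ .u :: sUl y) = true := (RedB_mid_aux x y).1
theorem RedB_S_mid (x y : ℕ) : RedB (.S :: (Usl x ++ .u :: sUl y)) = true := (RedB_mid_aux x y).2

theorem RedB_Su_sUl (j : ℕ) : RedB (.S :: .u :: sUl j) = true := by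
  simp only [RedB_cc, good, Bool.true_and]
  exact RedB_u_sUl j

theorem RedB_uS_Usl (j : ℕ) : RedB (.u :: .S :: Usl j) = true := by
  simp only [RedB_cc, good, Bool.true_and]
  exact RedB_S_Usl j

theorem RedB_uS_mid (x y : ℕ) : RedB (.u :: .S :: (Usl x ++ .u :: sUl y)) = true := by
  simp only [RedB_cc, good, Bool.true_and]
  exact RedB_S_mid x y

theorem RedB_SuS_Usl (j : ℕ) : RedB (.S :: .u :: .S :: Usl j) = true := by
  simp only [RedB_cc, good, Bool.true_and]
  exact RedB_S_Usl j

theorem RedB_SuS_mid (x y : ℕ) : RedB (.S :: .u :: .S :: (Usl x ++ .u :: sUl y)) = true := by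
  simp only [RedB_cc, good, Bool.true_and]
  exact RedB_S_mid x y

theorem RedB_SuSuS_mid (x y : ℕ) :
    RedB (.S :: .u :: .S :: .u :: .S :: (Usl x ++ .u :: sUl y)) = true := by
  simp only [RedB_cc, good, Bool.true_and]
  exact RedB_S_mid x y

theorem RedB_SuSuS_Usl (j : ℕ) : RedB (.S :: .u :: .S :: .u :: .S :: Usl j) = true := by
  simp only [RedB_cc, good, Bool.true_and]
  exact RedB_S_Usl j

/-! ### peeling principle -/

theorem red_peel (c : Fin 2) (w' : List (Fin 2)) (R' : List Lam)
    (hT : red (c :: w') = stepL c R') (hR : RedB R' = true) : red w' = R' := by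
  apply ev_inj _ _ (RedB_red w') hR
  rw [red_cons] at hT
  rcases fin2_cases c with rfl | rfl
  · have h1 : ev (Pa (red w')) = ev (Pa R') := by
      rw [show stepL 0 = Pa from rfl] at hT; rw [hT]
    rw [ev_Pa, ev_Pa] at h1
    exact mul_left_cancel h1
  · have h1 : ev (Pb (red w')) = ev (Pb R') := by
      rw [show stepL 1 = Pb from rfl] at hT; rw [hT]
    rw [ev_Pb, ev_Pb] at h1
    exact mul_left_cancel h1

/-! ### rigidity of `a^x b^y` -/

theorem G1a (w : List (Fin 2)) : ∀ y, red w = sUl y → w.length = y →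
    w = List.replicate y 1 := by
  induction w with
  | nil => intro y _ hl; simp at hl; subst hl; rfl
  | cons c w' ih =>
    intro y hr hl
    rcases fin2_cases c with rfl | rfl
    · exfalso
      have hP : stepL 0 (.S :: .u :: sUl y) = sUl y := rfl
      have hred : red w' = .S :: .u :: sUl y :=
        red_peel 0 w' _ (hr.trans hP.symm) (RedB_Su_sUl y)
      have h1 := mw_red_le w'
      rw [hred, mw_Su, mw_U_sUl] at h1
      simp only [List.length_cons] at hl
      omega
    · rcases y with _ | y'
      · simp at hl
      · have hP : stepL 1 (sUl y') = sUl (y'+1) := by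
          rcases y' with _ | y''
          · rfl
          · rfl
        have hred : red w' = sUl y' :=
          red_peel 1 w' _ (hr.trans hP.symm) (RedB_sUl y')
        have hw' : w' = List.replicate y' 1 := by
          apply ih y' hred
          simp only [List.length_cons] at hl
          omega
        rw [hw', List.replicate_succ]

/-! ### rigidity of `b^p a^x` -/

theorem G1b (w : List (Fin 2)) : ∀ x, red w = Usl x → w.length = x →
    w = List.replicate x 0 := by
  induction w with
  | nil => intro x _ hl; simp at hl; subst hl; rfl
  | cons c w' ih =>
    intro x hr hl
    rcases fin2_cases c with rfl | rfl
    · rcases x with _ | x'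
      · simp at hl
      · have hP : stepL 0 (Usl x') = Usl (x'+1) := by
          rcases x' with _ | x''
          · rfl
          · rfl
        have hred : red w' = Usl x' :=
          red_peel 0 w' _ (hr.trans hP.symm) (RedB_Usl x')
        have hw' : w' = List.replicate x' 0 := by
          apply ih x' hred
          simp only [List.length_cons] at hl
          omega
        rw [hw', List.replicate_succ]
    · exfalso
      have hP : stepL 1 (.u :: .S :: Usl x) = Usl x := rfl
      have hred : red w' = .u :: .S :: Usl x :=
        red_peel 1 w' _ (hr.trans hP.symm) (RedB_uS_Usl x)
      have h1 := mw_red_le w'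
      rw [hred, mw_u, mw_S_Usl] at h1
      simp only [List.length_cons] at hl
      omega

/-! ### rigidity of `a^{x+1} b^{y+1}` -/

theorem G1c (w : List (Fin 2)) : ∀ x y, red w = Usl x ++ .u :: sUl y →
    w.length = x + y + 2 →
    w = List.replicate (x+1) 0 ++ List.replicate (y+1) 1 := by
  induction w with
  | nil => intro x y _ hl; simp at hl
  | cons c w' ih =>
    intro x y hr hl
    rcases fin2_cases c with rfl | rfl
    · rcases x with _ | x'
      · -- x = 0 : target u :: sUl y, previous word is b^{y+1}
        have hP : stepL 0 (sUl (y+1)) = Usl 0 ++ .u :: sUl y := rfl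
        have hred : red w' = sUl (y+1) :=
          red_peel 0 w' _ (hr.trans hP.symm) (RedB_sUl (y+1))
        have hw' : w' = List.replicate (y+1) 1 := by
          apply G1a w' (y+1) hred
          simp only [List.length_cons] at hl
          omega
        rw [hw']
        rfl
      · have hP : stepL 0 (Usl x' ++ .u :: sUl y) = Usl (x'+1) ++ .u :: sUl y := by
          rcases x' with _ | x''
          · rfl
          · rfl
        have hred : red w' = Usl x' ++ .u :: sUl y :=
          red_peel 0 w' _ (hr.trans hP.symm) (RedB_mid x' y)
        have hw' : w' = List.replicate (x'+1) 0 ++ List.replicate (y+1) 1 := by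
          apply ih x' y hred
          simp only [List.length_cons] at hl
          omega
        rw [hw', show (x'+1)+1 = x'+2 from rfl, List.replicate_succ]
        rfl
    · exfalso
      have hP : stepL 1 (.u :: .S :: (Usl x ++ .u :: sUl y)) = Usl x ++ .u :: sUl y := rfl
      have hred : red w' = .u :: .S :: (Usl x ++ .u :: sUl y) :=
        red_peel 1 w' _ (hr.trans hP.symm) (RedB_uS_mid x y)
      have h1 := mw_red_le w'
      rw [hred, mw_u, mw_key] at h1
      simp only [List.length_cons] at hl
      omega

/-! ### endgame lemmas -/

theorem getLast?_repl_one (n : ℕ) : (List.replicate (n+1) (1 : Fin 2)).getLast? = some 1 := by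
  induction n with
  | zero => rfl
  | succ n ih =>
    rw [List.replicate_succ, show List.replicate (n+1) (1 : Fin 2) = 1 :: List.replicate n 1 from
      List.replicate_succ .., List.getLast?_cons_cons,
      ← show List.replicate (n+1) (1 : Fin 2) = 1 :: List.replicate n 1 from List.replicate_succ ..]
    exact ih

theorem last_repl_contra (m n : ℕ)
    (h : (List.replicate m (0 : Fin 2) ++ List.replicate (n+1) 1).getLast? = some 0) : False := by
  rw [List.getLast?_append_of_ne_nil _ (by simp), getLast?_repl_one] at h
  simp at h

theorem E1 (w : List (Fin 2)) (hr : red w = [.S]) (hl : w.length = 3)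
    (hlast : w.getLast? = some 0) : w = [0, 1, 0] := by
  rcases w with _ | ⟨c1, _ | ⟨c2, _ | ⟨c3, _ | w4⟩⟩⟩ <;> simp_all
  rcases fin2_cases c1 with rfl | rfl <;> rcases fin2_cases c2 with rfl | rfl <;>
    rcases fin2_cases c3 with rfl | rfl <;> revert hr hlast <;> decide

theorem Ek : ∀ (t : ℕ) (w : List (Fin 2)), red w = .U :: sUl t → w.length = t + 4 →
    w.getLast? = some 0 → w = List.replicate (t+2) 0 ++ [1, 0] := by
  intro t
  induction t with
  | zero =>
    intro w hr hl hlast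
    rcases w with _ | ⟨c, w'⟩
    · simp at hl
    have hl' : w'.length = 3 := by simp at hl; omega
    have hlast' : w'.getLast? = some 0 := by
      rcases w' with _ | ⟨d, w''⟩
      · simp at hl'
      · rwa [List.getLast?_cons_cons] at hlast
    rcases fin2_cases c with rfl | rfl
    · have hP : stepL 0 [.S] = [.U] := rfl
      have hred : red w' = [.S] := red_peel 0 w' _ (hr.trans hP.symm) rfl
      have := E1 w' hred hl' hlast'
      rw [this]
      rfl
    · exfalso
      have hP : stepL 1 (.u :: sUl 1) = [.U] := rfl
      have hred : red w' = .u :: sUl 1 := red_peel 1 w' _ (hr.trans hP.symm) (RedB_u_sUl 1)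
      have hw' : w' = List.replicate 1 0 ++ List.replicate 2 1 := by
        apply G1c w' 0 1
        · simpa using hred
        · omega
      exact last_repl_contra 1 1 (hw' ▸ hlast')
  | succ t ih =>
    intro w hr hl hlast
    rcases w with _ | ⟨c, w'⟩
    · simp at hl
    have hl' : w'.length = t + 4 := by simp at hl; omega
    have hlast' : w'.getLast? = some 0 := by
      rcases w' with _ | ⟨d, w''⟩
      · simp at hl'
      · rwa [List.getLast?_cons_cons] at hlast
    rcases fin2_cases c with rfl | rfl
    · have hP : stepL 0 (.U :: sUl t) = .U :: sUl (t+1) := rfl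
      have hred : red w' = .U :: sUl t := red_peel 0 w' _ (hr.trans hP.symm) (RedB_U_sUl t)
      have hw' := ih w' hred hl' hlast'
      rw [hw']
      rfl
    · exfalso
      have hP : stepL 1 (.u :: sUl (t+2)) = .U :: sUl (t+1) := rfl
      have hred : red w' = .u :: sUl (t+2) :=
        red_peel 1 w' _ (hr.trans hP.symm) (RedB_u_sUl (t+2))
      have hw' : w' = List.replicate 1 0 ++ List.replicate (t+3) 1 := by
        apply G1c w' 0 (t+2)
        · simpa using hred
        · omega
      exact last_repl_contra 1 (t+2) (hw' ▸ hlast')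

/-! ### the target word and its reduced form -/

theorem wordProd_cons (c : Fin 2) (w : List (Fin 2)) :
    wordProd (c :: w) = PresentedGroup.of c * wordProd w := by simp [wordProd]

theorem wordProd_append (w1 w2 : List (Fin 2)) :
    wordProd (w1 ++ w2) = wordProd w1 * wordProd w2 := by
  simp [wordProd]

theorem wordProd_replicate (n : ℕ) (c : Fin 2) :
    wordProd (List.replicate n c) = (PresentedGroup.of c) ^ n := by
  induction n with
  | zero => simp [wordProd]
  | succ n ih => rw [List.replicate_succ, wordProd_cons, ih, pow_succ']

theorem wordProd_T (i k : ℕ) :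
    wordProd (List.replicate i 1 ++ 0 :: List.replicate k 1) = b ^ i * a * b ^ k := by
  rw [wordProd_append, wordProd_cons, wordProd_replicate, wordProd_replicate,
    show a = PresentedGroup.of 0 from rfl, show b = PresentedGroup.of 1 from rfl, mul_assoc]

theorem red_repl1 (n : ℕ) : red (List.replicate n 1) = sUl n := by
  induction n with
  | zero => rfl
  | succ n ih =>
    rw [List.replicate_succ, red_cons, ih]
    rcases n with _ | n'
    · rfl
    · rfl

theorem red_T_i1_k1 : red (List.replicate 1 1 ++ 0 :: List.replicate 1 1) = [.S] := rfl

theorem red_a_repl (k : ℕ) : red (0 :: List.replicate (k+2) 1) = .u :: sUl (k+1) := by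
  rw [red_cons, red_repl1]
  rfl

theorem red_T_i1 (k : ℕ) :
    red (List.replicate 1 1 ++ 0 :: List.replicate (k+2) 1) = .U :: sUl k := by
  show red (1 :: 0 :: List.replicate (k+2) 1) = _
  rw [red_cons, red_a_repl]
  rfl

theorem red_T_k1 (i : ℕ) :
    red (List.replicate (i+2) 1 ++ 0 :: List.replicate 1 1) = .S :: Usl (i+1) := by
  induction i with
  | zero => rfl
  | succ i ih =>
    rw [List.replicate_succ, List.cons_append, red_cons, ih]
    rfl

theorem red_T_gen (i k : ℕ) :
    red (List.replicate (i+2) 1 ++ 0 :: List.replicate (k+2) 1) =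
      .S :: (Usl i ++ .u :: sUl k) := by
  induction i with
  | zero =>
    show red (1 :: (List.replicate 1 1 ++ 0 :: List.replicate (k+2) 1)) = _
    rw [red_cons, red_T_i1]
    rfl
  | succ i ih =>
    rw [List.replicate_succ, List.cons_append, red_cons, ih]
    rfl

/-! ### the main theorem -/

/-- If a positive word `v` over {a, b} (a = 0, b = 1) begins and ends with `a` and
represents `b^i · a · b^k` in the braid group with i, k ≥ 1, then either i = 1 and
v = a^k·b·a, or k = 1 and v = a·b·a^i. -/
theorem stmt12 (v : List (Fin 2)) (i k : ℕ) (hi : 1 ≤ i) (hk : 1 ≤ k)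
    (hfirst : v.head? = some 0) (hlast : v.getLast? = some 0)
    (h : wordProd v = b ^ i * a * b ^ k) :
    (i = 1 ∧ v = List.replicate k 0 ++ [1, 0]) ∨
    (k = 1 ∧ v = [0, 1] ++ List.replicate i 0) := by
  have h' : wordProd v = wordProd (List.replicate i 1 ++ 0 :: List.replicate k 1) :=
    h.trans (wordProd_T i k).symm
  have hlen : v.length = i + k + 1 := by
    have hL := congrArg lenHom h'
    rw [lenHom_wordProd, lenHom_wordProd] at hL
    have h2 := Multiplicative.ofAdd.injective hL
    simp only [List.length_append, List.length_cons, List.length_replicate] at h2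
    omega
  have hred : red v = red (List.replicate i 1 ++ 0 :: List.replicate k 1) := by
    have hR := congrArg psi h'
    rw [psi_wordProd, psi_wordProd] at hR
    exact ev_inj _ _ (RedB_red v) (RedB_red _) hR
  rcases i with _ | _ | i''
  · omega
  · -- i = 1
    left
    rcases k with _ | _ | k''
    · omega
    · refine ⟨rfl, ?_⟩
      have h5 : red v = [.S] := hred.trans red_T_i1_k1
      have h6 := E1 v h5 (by omega) hlast
      rw [h6]
      rfl
    · refine ⟨rfl, ?_⟩
      have h5 : red v = .U :: sUl k'' := hred.trans (red_T_i1 k'')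
      exact Ek k'' v h5 (by omega) hlast
  · -- i = i'' + 2
    rcases v with _ | ⟨c, v'⟩
    · simp at hfirst
    have hc : c = 0 := by simpa using hfirst
    subst hc
    rcases k with _ | _ | k''
    · omega
    · -- k = 1
      right
      refine ⟨rfl, ?_⟩
      have hredv : red (0 :: v') = .S :: Usl (i''+1) := hred.trans (red_T_k1 i'')
      have hP : stepL 0 (.S :: .u :: .S :: Usl (i''+1)) = .S :: Usl (i''+1) := rfl
      have hred' : red v' = .S :: .u :: .S :: Usl (i''+1) :=
        red_peel 0 v' _ (hredv.trans hP.symm) (RedB_SuS_Usl (i''+1))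
      rcases v' with _ | ⟨c2, v''⟩
      · simp only [List.length_cons, List.length_nil] at hlen; omega
      rcases fin2_cases c2 with rfl | rfl
      · exfalso
        have hP2 : stepL 0 (.S :: .u :: .S :: .u :: .S :: Usl (i''+1)) =
            .S :: .u :: .S :: Usl (i''+1) := rfl
        have hred'' : red v'' = .S :: .u :: .S :: .u :: .S :: Usl (i''+1) :=
          red_peel 0 v'' _ (hred'.trans hP2.symm) (RedB_SuSuS_Usl (i''+1))
        have h1 := mw_red_le v''
        rw [hred'', mw_Su, mw_US, mw_u, mw_S_Usl] at h1
        simp only [List.length_cons] at hlen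
        omega
      · have hP2 : stepL 1 (Usl (i''+2)) = .S :: .u :: .S :: Usl (i''+1) := rfl
        have hred'' : red v'' = Usl (i''+2) :=
          red_peel 1 v'' _ (hred'.trans hP2.symm) (RedB_Usl (i''+2))
        have hv'' : v'' = List.replicate (i''+2) 0 := by
          apply G1b v'' _ hred''
          simp only [List.length_cons] at hlen
          omega
        rw [hv'']
        rfl
    · -- k = k'' + 2 : impossible
      exfalso
      have hredv : red (0 :: v') = .S :: (Usl i'' ++ .u :: sUl k'') :=
        hred.trans (red_T_gen i'' k'')
      have hP : stepL 0 (.S :: .u :: .S :: (Usl i'' ++ .u :: sUl k'')) =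
          .S :: (Usl i'' ++ .u :: sUl k'') := rfl
      have hred' : red v' = .S :: .u :: .S :: (Usl i'' ++ .u :: sUl k'') :=
        red_peel 0 v' _ (hredv.trans hP.symm) (RedB_SuS_mid i'' k'')
      rcases v' with _ | ⟨c2, v''⟩
      · simp only [List.length_cons, List.length_nil] at hlen; omega
      rcases fin2_cases c2 with rfl | rfl
      · have hP2 : stepL 0 (.S :: .u :: .S :: .u :: .S :: (Usl i'' ++ .u :: sUl k'')) =
            .S :: .u :: .S :: (Usl i'' ++ .u :: sUl k'') := rfl
        have hred'' : red v'' = .S :: .u :: .S :: .u :: .S :: (Usl i'' ++ .u :: sUl k'') :=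
          red_peel 0 v'' _ (hred'.trans hP2.symm) (RedB_SuSuS_mid i'' k'')
        have h1 := mw_red_le v''
        rw [hred'', mw_Su, mw_US, mw_u, mw_key] at h1
        simp only [List.length_cons] at hlen
        omega
      · have hP2 : stepL 1 (Usl (i''+1) ++ .u :: sUl k'') =
            .S :: .u :: .S :: (Usl i'' ++ .u :: sUl k'') := by
          simp only [Usl_succ, List.cons_append]
          rfl
        have hred'' : red v'' = Usl (i''+1) ++ .u :: sUl k'' :=
          red_peel 1 v'' _ (hred'.trans hP2.symm) (RedB_mid (i''+1) k'')
        have hv'' : v'' = List.replicate (i''+2) 0 ++ List.replicate (k''+1) 1 := by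
          apply G1c v'' _ _ hred''
          simp only [List.length_cons] at hlen
          omega
        rcases v'' with _ | ⟨d, v3⟩
        · simp at hv''
        · have hlast'' : (d :: v3).getLast? = some 0 := by
            rw [List.getLast?_cons_cons, List.getLast?_cons_cons] at hlast
            exact hlast
          exact last_repl_contra (i''+2) k'' (hv'' ▸ hlast'')
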